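/- arXiv:1811.11305 — 2 statements merged into one kernel-verified Lean document; each statement's English description precedes it below -/
import Mathlib

section
/- Let a and b be nonzero integers, n a positive integer such that aj + b ≠ 0 for every integer j with 1 ≤ j ≤ n, and k a nonnegative integer. Then ∑_{j=1}^{n} 1/(aj+b)^{2k+1} = -1/(2b^{2k+1}) + 1/(2(an+b)^{2k+1}) + (-1)^{k}(2π)^{2k+1} ∫_{0}^{1} [ ∑_{j=0}^{k} B_{2j}(2-2^{2j})(1-u)^{2k+1-2j}/((2j)!(2k+1-2j)!) ]·sin(π(an+2b)u)·sin(πanu)·cot(πau) du. -/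
/-!
Write `P_k` for the polynomial in the integrand. The telescoping identity
`sin (nθ + 2φ) sin (nθ) cos θ = (∑_{j=1}^n sin 2(jθ + φ) + sin 2φ / 2 - sin 2(nθ + φ) / 2) sin θ`
turns the integrand, off the zeros of `sin (πau)`, into `P_k(u)` times a trapezoidal sum of
`sin (2πmu)` over `m = aj + b`. Integrating by parts twice, using `P_k'' = P_{k-1}`, `P_k(1) = 0`
and `P_k(0) = [k = 0]`, gives `∫₀¹ P_k(u) sin (2πmu) du = (-1)^k / (2πm)^(2k+1)`. The value
`P_k(0)` is the coefficient of `X^(2k+1)` in `(X / sinh X) · 2 sinh X = 2X`, where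
`X / sinh X = 2 B(X) - B(2X)` for the exponential generating function `B` of the Bernoulli numbers.
-/

open Finset Nat Real intervalIntegral

theorem sum_range_two_mul_of_odd_eq_zero {M : Type*} [AddCommMonoid M] (f : ℕ → M)
    (hf : ∀ i, Odd i → f i = 0) (m : ℕ) :
    ∑ i ∈ range (2 * m), f i = ∑ j ∈ range m, f (2 * j) := by
  induction m with
  | zero => simp
  | succ m ih =>
    rw [show 2 * (m + 1) = 2 * m + 1 + 1 by ring, sum_range_succ, sum_range_succ, ih,
      sum_range_succ, hf _ (odd_two_mul_add_one m), add_zero]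

section PowerSeries

open PowerSeries

theorem coeff_two_mul_bernoulliPowerSeries_sub_rescale (p : ℕ) :
    coeff p (2 * bernoulliPowerSeries ℚ - rescale 2 (bernoulliPowerSeries ℚ)) =
      (2 - 2 ^ p) * bernoulli p / p ! := by
  rw [← map_ofNat (C (R := ℚ)) 2]
  simp [bernoulliPowerSeries, coeff_rescale, coeff_C_mul]
  ring

theorem coeff_exp_sub_evalNegHom_exp (q : ℕ) :
    coeff q (exp ℚ - evalNegHom (exp ℚ)) = (1 - (-1) ^ q) / q ! := by
  simp [evalNegHom, coeff_rescale, coeff_exp]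
  ring

/-- `2 B(X) - B(2X) = X / sinh X` for the Bernoulli generating function `B(X) = X / (e^X - 1)`. -/
theorem two_mul_bernoulliPowerSeries_sub_rescale_mul_exp_sub_evalNegHom_exp :
    (2 * bernoulliPowerSeries ℚ - rescale 2 (bernoulliPowerSeries ℚ)) *
      (exp ℚ - evalNegHom (exp ℚ)) = 2 * X := by
  set B := bernoulliPowerSeries ℚ
  set E := exp ℚ
  have hB : B * (E - 1) = X := bernoulliPowerSeries_mul_exp_sub_one ℚ
  have hB₂ : rescale 2 B * (E * E - 1) = 2 * X := by
    have hE : rescale (2 : ℚ) E = E * E := by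
      simpa [sq] using (exp_pow_eq_rescale_exp (A := ℚ) 2).symm
    simpa [hE, rescale_X, map_ofNat] using congrArg (rescale (2 : ℚ)) hB
  have hinv : E * evalNegHom E = 1 := exp_mul_exp_neg_eq_one
  refine (isUnit_exp ℚ).mul_right_cancel ?_
  linear_combination 2 * (E + 1) * hB - hB₂ - (2 * B - rescale 2 B) * hinv

theorem sum_bernoulli_mul_two_sub_two_pow_div_factorial (k : ℕ) :
    ∑ j ∈ range (k + 1),
      bernoulli (2 * j) * (2 - 2 ^ (2 * j)) / ((2 * j)! * (2 * (k - j) + 1)!) =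
      if k = 0 then 1 else 0 := by
  have hodd : ∀ p, Odd p →
      coeff p (2 * bernoulliPowerSeries ℚ - rescale 2 (bernoulliPowerSeries ℚ)) = 0 := by
    intro p hp
    rcases eq_or_ne p 1 with rfl | hp1
    · simp [coeff_two_mul_bernoulliPowerSeries_sub_rescale]
    · simp [coeff_two_mul_bernoulliPowerSeries_sub_rescale,
        bernoulli_eq_zero_of_odd hp (by rcases hp with ⟨m, rfl⟩; omega)]
  have hterm : ∀ j ∈ range (k + 1),
      coeff (2 * j) (2 * bernoulliPowerSeries ℚ - rescale 2 (bernoulliPowerSeries ℚ)) *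
        coeff (2 * k + 1 - 2 * j) (exp ℚ - evalNegHom (exp ℚ)) =
      2 * (bernoulli (2 * j) * (2 - 2 ^ (2 * j)) / ((2 * j)! * (2 * (k - j) + 1)!)) := by
    intro j hj
    rw [coeff_two_mul_bernoulliPowerSeries_sub_rescale, coeff_exp_sub_evalNegHom_exp,
      show 2 * k + 1 - 2 * j = 2 * (k - j) + 1 by simp at hj; omega,
      (odd_two_mul_add_one _).neg_one_pow]
    field_simp
    ring
  have h := congrArg (coeff (2 * k + 1))
    two_mul_bernoulliPowerSeries_sub_rescale_mul_exp_sub_evalNegHom_exp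
  rw [coeff_mul, Nat.sum_antidiagonal_eq_sum_range_succ (fun i j => coeff i _ * coeff j _),
    Nat.succ_eq_add_one, show 2 * k + 1 + 1 = 2 * (k + 1) by ring,
    sum_range_two_mul_of_odd_eq_zero _ fun i hi => by rw [hodd i hi, zero_mul],
    sum_congr rfl hterm, ← mul_sum, ← map_ofNat (C (R := ℚ)) 2, coeff_C_mul, coeff_X] at h
  simp only [show 2 * k + 1 = 1 ↔ k = 0 by omega] at h
  split_ifs at h ⊢ <;> linarith

end PowerSeries

noncomputable def oneSubPowDiv (m : ℕ) (u : ℝ) : ℝ := (1 - u) ^ m / m !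

theorem hasDerivAt_oneSubPowDiv (m : ℕ) (u : ℝ) :
    HasDerivAt (oneSubPowDiv (m + 1)) (-oneSubPowDiv m u) u := by
  refine ((((hasDerivAt_id u).const_sub 1).fun_pow (m + 1)).div_const ((m + 1)! : ℝ)).congr_deriv ?_
  simp only [oneSubPowDiv, factorial_succ, cast_mul, add_tsub_cancel_right, id]
  field_simp

noncomputable def kernelCoeff (j : ℕ) : ℝ := bernoulli (2 * j) * (2 - 2 ^ (2 * j)) / (2 * j)!

/-- `bernoulliKernel 1 k` is the polynomial `P_k` of the integrand; up to sign, the other shifts `s`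
are its derivatives. -/
noncomputable def bernoulliKernel (s k : ℕ) (u : ℝ) : ℝ :=
  ∑ j ∈ range (k + 1), kernelCoeff j * oneSubPowDiv (2 * (k - j) + s) u

theorem bernoulliKernel_one_apply (k : ℕ) (u : ℝ) :
    bernoulliKernel 1 k u = ∑ j ∈ range (k + 1), (bernoulli (2 * j) : ℝ) * (2 - 2 ^ (2 * j)) *
      (1 - u) ^ (2 * k + 1 - 2 * j) / ((2 * j)! * (2 * k + 1 - 2 * j)!) := by
  refine sum_congr rfl fun j hj => ?_
  rw [show 2 * k + 1 - 2 * j = 2 * (k - j) + 1 by simp at hj; omega, kernelCoeff, oneSubPowDiv]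
  ring

@[fun_prop]
theorem continuous_bernoulliKernel (s k : ℕ) : Continuous (bernoulliKernel s k) := by
  unfold bernoulliKernel oneSubPowDiv
  fun_prop

theorem hasDerivAt_bernoulliKernel (s k : ℕ) (u : ℝ) :
    HasDerivAt (bernoulliKernel (s + 1) k) (-bernoulliKernel s k u) u := by
  simp only [bernoulliKernel, ← sum_neg_distrib, ← mul_neg]
  exact HasDerivAt.fun_sum fun j _ => (hasDerivAt_oneSubPowDiv _ u).const_mul _

theorem bernoulliKernel_zero_zero (u : ℝ) : bernoulliKernel 0 0 u = 1 := by
  simp [bernoulliKernel, kernelCoeff, oneSubPowDiv]; norm_num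

theorem bernoulliKernel_zero_succ (k : ℕ) (u : ℝ) :
    bernoulliKernel 0 (k + 1) u = bernoulliKernel 2 k u + kernelCoeff (k + 1) := by
  rw [bernoulliKernel, sum_range_succ, bernoulliKernel]
  congr 1
  · refine sum_congr rfl fun j hj => ?_
    rw [show 2 * (k + 1 - j) + 0 = 2 * (k - j) + 2 by simp at hj; omega]
  · simp [oneSubPowDiv]

theorem hasDerivAt_bernoulliKernel_zero_succ (k : ℕ) (u : ℝ) :
    HasDerivAt (bernoulliKernel 0 (k + 1)) (-bernoulliKernel 1 k u) u := by
  rw [funext (bernoulliKernel_zero_succ k)]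
  exact (hasDerivAt_bernoulliKernel 1 k u).add_const _

theorem bernoulliKernel_succ_one (s k : ℕ) : bernoulliKernel (s + 1) k 1 = 0 := by
  simp [bernoulliKernel, oneSubPowDiv]

theorem bernoulliKernel_one_zero (k : ℕ) : bernoulliKernel 1 k 0 = if k = 0 then 1 else 0 := by
  have h := congrArg (fun q : ℚ => (q : ℝ)) (sum_bernoulli_mul_two_sub_two_pow_div_factorial k)
  rw [apply_ite (fun q : ℚ => (q : ℝ)), Rat.cast_one, Rat.cast_zero] at h
  push_cast at h
  rw [← h]
  refine sum_congr rfl fun j _ => ?_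
  simp only [kernelCoeff, oneSubPowDiv, sub_zero, one_pow]
  ring

theorem integral_mul_sin_of_hasDerivAt₂ {f f' f'' : ℝ → ℝ} {θ : ℝ} (hθ : θ ≠ 0) (hs : sin θ = 0)
    (hc : cos θ = 1) (hf : ∀ x, HasDerivAt f (f' x) x) (hf' : ∀ x, HasDerivAt f' (f'' x) x)
    (hf'' : IntervalIntegrable f'' MeasureTheory.volume 0 1) :
    ∫ x in (0 : ℝ)..1, f x * sin (θ * x) =
      (f 0 - f 1) / θ - (∫ x in (0 : ℝ)..1, f'' x * sin (θ * x)) / θ ^ 2 := by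
  have hlin : ∀ x, HasDerivAt (fun x => θ * x) θ x := fun x => by
    simpa using (hasDerivAt_id x).const_mul θ
  have hcos : ∀ x, HasDerivAt (fun x => -cos (θ * x) / θ) (sin (θ * x)) x := fun x => by
    refine ((hlin x).cos.fun_neg.div_const θ).congr_deriv ?_
    field_simp
  have hsin : ∀ x, HasDerivAt (fun x => sin (θ * x) / θ) (cos (θ * x)) x := fun x => by
    refine ((hlin x).sin.div_const θ).congr_deriv ?_
    field_simp
  have hf'c : Continuous f' := continuous_iff_continuousAt.2 fun x => (hf' x).continuousAt
  have h₁ := integral_mul_deriv_eq_deriv_mul (fun x _ => hf x) (fun x _ => hcos x)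
    (hf'c.intervalIntegrable 0 1)
    ((by fun_prop : Continuous fun x => sin (θ * x)).intervalIntegrable 0 1)
  have h₂ := integral_mul_deriv_eq_deriv_mul (fun x _ => hf' x) (fun x _ => hsin x)
    hf'' ((by fun_prop : Continuous fun x => cos (θ * x)).intervalIntegrable 0 1)
  simp only [mul_div_assoc', mul_neg, neg_div, integral_neg, integral_div] at h₁ h₂
  rw [h₁, h₂]
  simp only [hs, hc, mul_zero, mul_one, cos_zero, sin_zero]
  field_simp
  ring

theorem integral_bernoulliKernel_mul_sin (k : ℕ) {θ : ℝ} (hs : sin θ = 0) (hc : cos θ = 1) :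
    ∫ u in (0 : ℝ)..1, bernoulliKernel 1 k u * sin (θ * u) = (-1) ^ k / θ ^ (2 * k + 1) := by
  rcases eq_or_ne θ 0 with rfl | hθ
  · simp -- both sides are `0`, the right one because `x / 0 = 0`
  induction k with
  | zero =>
    have hconst : ∀ u, HasDerivAt (fun u => -bernoulliKernel 0 0 u) 0 u := fun u => by
      simpa [bernoulliKernel_zero_zero] using hasDerivAt_const u (-1 : ℝ)
    rw [integral_mul_sin_of_hasDerivAt₂ hθ hs hc (hasDerivAt_bernoulliKernel 0 0) hconst
      intervalIntegrable_const, bernoulliKernel_one_zero, bernoulliKernel_succ_one]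
    simp
  | succ k ih =>
    have h'' : ∀ u, HasDerivAt (fun u => -bernoulliKernel 0 (k + 1) u) (bernoulliKernel 1 k u) u :=
      fun u => by simpa using (hasDerivAt_bernoulliKernel_zero_succ k u).fun_neg
    rw [integral_mul_sin_of_hasDerivAt₂ hθ hs hc (hasDerivAt_bernoulliKernel 0 (k + 1)) h''
      ((continuous_bernoulliKernel 1 k).intervalIntegrable 0 1), ih, bernoulliKernel_one_zero,
      bernoulliKernel_succ_one, if_neg k.succ_ne_zero]
    field_simp
    ring

theorem sin_mul_sin_mul_cos_eq_sum (p q : ℝ) (n : ℕ) :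
    sin (n * p + 2 * q) * sin (n * p) * cos p =
      (∑ j ∈ Icc 1 n, sin (2 * (j * p + q)) + sin (2 * q) / 2 - sin (2 * (n * p + q)) / 2) *
        sin p := by
  induction n with
  | zero => simp
  | succ n ih =>
    have prod_to_sum : ∀ A B, sin A * sin B = (cos (A - B) - cos (A + B)) / 2 := fun A B => by
      rw [cos_sub, cos_add]; ring
    set w := 2 * (n * p + q) + p with hw
    have h₁ : sin ((n + 1) * p + 2 * q) * sin ((n + 1) * p) = (cos (2 * q) - cos (w + p)) / 2 := by
      rw [prod_to_sum, hw]; congr 3 <;> ring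
    have h₀ : sin (n * p + 2 * q) * sin (n * p) = (cos (2 * q) - cos (w - p)) / 2 := by
      rw [prod_to_sum, hw]; congr 3 <;> ring
    have hstep : cos p * (cos (w - p) - cos (w + p)) = sin p * (sin (w + p) + sin (w - p)) := by
      simp only [cos_add, cos_sub, sin_add, sin_sub]; ring
    rw [sum_Icc_succ_top (by omega)]
    push_cast
    rw [show 2 * ((n + 1) * p + q) = w + p by ring]
    rw [show 2 * (n * p + q) = w - p by ring] at ih
    linear_combination cos p * h₁ - cos p * h₀ + ih + hstep / 2

theorem integral_mul_sin_mul_sin_mul_cot {a : ℝ} (ha : a ≠ 0) (b : ℝ) (n : ℕ) (f : ℝ → ℝ)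
    (c d : ℝ) :
    ∫ u in c..d, f u * sin (π * (a * n + 2 * b) * u) * sin (π * a * n * u) * cot (π * a * u) =
      ∫ u in c..d, f u * (∑ j ∈ Icc 1 n, sin (2 * π * (a * j + b) * u) + sin (2 * π * b * u) / 2
        - sin (2 * π * (a * n + b) * u) / 2) := by
  have hzeros : {u | sin (π * a * u) = 0}.Countable := by
    refine (Set.countable_range fun m : ℤ => m / a).mono fun u hu => ?_
    obtain ⟨m, hm⟩ := sin_eq_zero_iff.1 hu
    have hmu : (m : ℝ) = a * u := mul_right_cancel₀ pi_ne_zero (by rw [hm]; ring)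
    exact ⟨m, by simp only [hmu, mul_div_cancel_left₀ _ ha]⟩
  refine integral_congr_ae ((hzeros.ae_notMem _).mono fun u hu _ => ?_)
  have hsin : sin (π * a * u) ≠ 0 := hu
  have h := sin_mul_sin_mul_cos_eq_sum (π * a * u) (π * b * u) n
  simp only [show ∀ j : ℝ, 2 * (j * (π * a * u) + π * b * u) = 2 * π * (a * j + b) * u from
    fun j => by ring] at h
  rw [show (n : ℝ) * (π * a * u) + 2 * (π * b * u) = π * (a * n + 2 * b) * u by ring,
    show (n : ℝ) * (π * a * u) = π * a * n * u by ring,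
    show 2 * (π * b * u) = 2 * π * b * u by ring] at h
  rw [cot_eq_cos_div_sin, mul_assoc (f u), mul_assoc (f u), ← mul_div_assoc, h,
    mul_div_cancel_right₀ _ hsin]

theorem integral_bernoulliKernel_mul_sin_two_pi_int (k : ℕ) (m : ℤ) :
    (-1) ^ k * (2 * π) ^ (2 * k + 1) *
        ∫ u in (0 : ℝ)..1, bernoulliKernel 1 k u * sin (2 * π * m * u) =
      1 / (m : ℝ) ^ (2 * k + 1) := by
  have hs : sin (2 * π * m) = 0 := by
    rw [show 2 * π * m = m * (2 * π) by ring, sin_periodic.int_mul_eq, sin_zero]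
  have hc : cos (2 * π * m) = 1 := by
    rw [show 2 * π * m = m * (2 * π) by ring, cos_int_mul_two_pi]
  rw [integral_bernoulliKernel_mul_sin k hs hc, mul_pow]
  rcases eq_or_ne (m : ℝ) 0 with hm | hm
  · simp [hm]
  field_simp
  rw [← pow_mul, mul_comm k 2, pow_mul, neg_one_sq, one_pow, one_mul]
  ring

theorem integral_bernoulliKernel_mul_trapezoid (k : ℕ) (a b : ℤ) (n : ℕ) :
    (-1) ^ k * (2 * π) ^ (2 * k + 1) * ∫ u in (0 : ℝ)..1, bernoulliKernel 1 k u *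
      (∑ j ∈ Icc 1 n, sin (2 * π * (a * j + b) * u) + sin (2 * π * b * u) / 2
        - sin (2 * π * (a * n + b) * u) / 2) =
      ∑ j ∈ Icc 1 n, 1 / ((a : ℝ) * j + b) ^ (2 * k + 1) + 1 / (2 * (b : ℝ) ^ (2 * k + 1))
        - 1 / (2 * ((a : ℝ) * n + b) ^ (2 * k + 1)) := by
  have hI : ∀ m : ℤ, ∀ x : ℝ, x = m → (-1) ^ k * (2 * π) ^ (2 * k + 1) *
      ∫ u in (0 : ℝ)..1, bernoulliKernel 1 k u * sin (2 * π * x * u) = 1 / x ^ (2 * k + 1) := by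
    rintro m x rfl
    exact integral_bernoulliKernel_mul_sin_two_pi_int k m
  have hsplit : ∀ u, bernoulliKernel 1 k u *
      (∑ j ∈ Icc 1 n, sin (2 * π * (a * j + b) * u) + sin (2 * π * b * u) / 2
        - sin (2 * π * (a * n + b) * u) / 2) =
      ∑ j ∈ Icc 1 n, bernoulliKernel 1 k u * sin (2 * π * (a * j + b) * u)
        + bernoulliKernel 1 k u * sin (2 * π * b * u) / 2
        - bernoulliKernel 1 k u * sin (2 * π * (a * n + b) * u) / 2 := fun u => by
    rw [mul_sub, mul_add, mul_sum, mul_div_assoc, mul_div_assoc]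
  rw [integral_congr fun u _ => hsplit u, integral_sub, integral_add, integral_finsetSum,
    integral_div, integral_div, mul_sub, mul_add, mul_sum, ← mul_div_assoc, ← mul_div_assoc,
    hI b b rfl, hI (a * n + b) _ (by push_cast; rfl)]
  · rw [sum_congr rfl fun (j : ℕ) _ => hI (a * j + b) ((a : ℝ) * j + b) (by push_cast; rfl)]
    simp only [div_div, mul_comm _ (2 : ℝ)]
  all_goals first
    | exact fun j _ => (by fun_prop : Continuous _).intervalIntegrable 0 1
    | exact (by fun_prop : Continuous _).intervalIntegrable 0 1

theorem stmt_9_general (a b : ℤ) (ha : a ≠ 0) (n : ℕ) (k : ℕ) :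
    ∑ j ∈ Finset.Icc 1 n, (1 : ℝ) / (a * j + b) ^ (2 * k + 1) =
      -(1 / (2 * (b : ℝ) ^ (2 * k + 1))) + 1 / (2 * ((a : ℝ) * n + b) ^ (2 * k + 1))
      + (-1 : ℝ) ^ k * (2 * π) ^ (2 * k + 1) *
          ∫ u in (0:ℝ)..1,
            (∑ j ∈ Finset.range (k + 1),
                (bernoulli (2 * j) : ℝ) * (2 - 2 ^ (2 * j)) *
                  (1 - u) ^ (2 * k + 1 - 2 * j) /
                  ((Nat.factorial (2 * j)) * (Nat.factorial (2 * k + 1 - 2 * j)))) *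
              Real.sin (π * (a * n + 2 * b) * u) * Real.sin (π * a * n * u) *
              Real.cot (π * a * u) := by
  simp only [← bernoulliKernel_one_apply]
  rw [integral_mul_sin_mul_sin_mul_cot (Int.cast_ne_zero.2 ha),
    integral_bernoulliKernel_mul_trapezoid]
  ring

theorem stmt_9 (a b : ℤ) (ha : a ≠ 0) (hb : b ≠ 0) (n : ℕ) (hn : 0 < n)
    (h : ∀ j : ℤ, 1 ≤ j → j ≤ n → a * j + b ≠ 0) (k : ℕ) :
    ∑ j ∈ Finset.Icc 1 n, (1 : ℝ) / (a * j + b) ^ (2 * k + 1) =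
      -(1 / (2 * (b : ℝ) ^ (2 * k + 1))) + 1 / (2 * ((a : ℝ) * n + b) ^ (2 * k + 1))
      + (-1 : ℝ) ^ k * (2 * π) ^ (2 * k + 1) *
          ∫ u in (0:ℝ)..1,
            (∑ j ∈ Finset.range (k + 1),
                (bernoulli (2 * j) : ℝ) * (2 - 2 ^ (2 * j)) *
                  (1 - u) ^ (2 * k + 1 - 2 * j) /
                  ((Nat.factorial (2 * j)) * (Nat.factorial (2 * k + 1 - 2 * j)))) *
              Real.sin (π * (a * n + 2 * b) * u) * Real.sin (π * a * n * u) *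
              Real.cot (π * a * u) :=
  stmt_9_general a b ha n k
end

section
/- Let a and b be nonzero integers, n a positive integer such that aj + b ≠ 0 for every integer j with 1 ≤ j ≤ n, m a nonzero complex number, and k a nonnegative integer. Writing HP_{r}(n) = ∑_{j=1}^{n} 1/(aj+b)^{r}, one has ∑_{j=1}^{n} (1/(aj+b)^{2k+1})·cos(2π(aj+b)/m) = -(1/(2b^{2k+1}))( cos(2πb/m) - ∑_{j=0}^{k} (-1)^{j}(2πb/m)^{2j}/(2j)! ) + (1/(2(an+b)^{2k+1}))( cos(2π(an+b)/m) - ∑_{j=0}^{k} (-1)^{j}(2π(an+b)/m)^{2j}/(2j)! ) + ∑_{j=0}^{k} ((-1)^{k-j}(2π/m)^{2k-2j}/(2k-2j)!)·HP_{2j+1}(n) + ((-1)^{k}(2π/m)^{2k+1}/(2(2k)!)) ∫_{0}^{1} (1-u)^{2k}·( cos(2π(an+b)u/m) - cos(2πbu/m) )·cot(πau/m) du. -/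
open Real Complex Finset

/-!
Taylor's formula with integral remainder,
`cos c = T_k(c) + (-1)^(k+1) c^(2k+1) / (2k)! * ∫₀¹ (1-u)^(2k) sin (c u) du`,
taken at `c = 2π(aj+b)/m` and divided by `(aj+b)^(2k+1)`, splits the left-hand side into the sums
`HP_(2i+1)(n)` and the sum over `j` of the remainder integrals. Under the integral sign, the
telescoping identity `2 sin(δ/2) ∑_{j=1}^n sin(jδ+θ) = cos(θ+δ/2) - cos(nδ+θ+δ/2)` with
`δ = 2πau/m`, `θ = 2πbu/m` rewrites `∑_j sin(2π(aj+b)u/m)` as the cotangent integrand plus the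
sines at `j = n` and `j = 0`, whose integrals are again Taylor remainders, now at `an+b` and `b`.
-/

lemma hasDerivAt_one_sub_ofReal_pow (r : ℕ) (u : ℝ) :
    HasDerivAt (fun v : ℝ => (1 - (v : ℂ)) ^ (r + 1)) (-((r + 1) * (1 - (u : ℂ)) ^ r)) u := by
  refine (((hasDerivAt_id u).ofReal_comp.const_sub 1).pow (r + 1)).congr_deriv ?_
  simp only [id, ofReal_one, Nat.add_sub_cancel]
  push_cast
  ring

lemma hasDerivAt_cos_mul_ofReal (c : ℂ) (u : ℝ) :
    HasDerivAt (fun v : ℝ => cos (c * v)) (-(c * sin (c * u))) u := by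
  refine ((Complex.hasDerivAt_cos (c * u)).comp u
    ((hasDerivAt_id u).ofReal_comp.const_mul c)).congr_deriv ?_
  simp only [ofReal_one]
  ring

lemma hasDerivAt_sin_mul_ofReal (c : ℂ) (u : ℝ) :
    HasDerivAt (fun v : ℝ => sin (c * v)) (c * cos (c * u)) u := by
  refine ((Complex.hasDerivAt_sin (c * u)).comp u
    ((hasDerivAt_id u).ofReal_comp.const_mul c)).congr_deriv ?_
  simp only [ofReal_one]
  ring

lemma mul_integral_sin_mul (c : ℂ) :
    c * ∫ u in (0 : ℝ)..1, sin (c * u) = 1 - cos c := by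
  have h := intervalIntegral.integral_eq_sub_of_hasDerivAt
    (fun u _ => hasDerivAt_cos_mul_ofReal c u) (Continuous.intervalIntegrable (by fun_prop) 0 1)
  rw [intervalIntegral.integral_neg, intervalIntegral.integral_const_mul] at h
  simp only [ofReal_zero, ofReal_one, mul_zero, mul_one, Complex.cos_zero] at h
  linear_combination -h

lemma mul_integral_one_sub_pow_succ_mul_sin (c : ℂ) (r : ℕ) :
    c * ∫ u in (0 : ℝ)..1, (1 - (u : ℂ)) ^ (r + 1) * sin (c * u)
      = 1 - (r + 1) * ∫ u in (0 : ℝ)..1, (1 - (u : ℂ)) ^ r * cos (c * u) := by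
  have h := intervalIntegral.integral_mul_deriv_eq_deriv_mul
    (fun u _ => hasDerivAt_one_sub_ofReal_pow r u) (fun u _ => hasDerivAt_cos_mul_ofReal c u)
    (Continuous.intervalIntegrable (by fun_prop) 0 1) (Continuous.intervalIntegrable (by fun_prop) 0 1)
  simp only [neg_mul, mul_neg, intervalIntegral.integral_neg, ← mul_assoc, mul_comm _ c] at h
  simp only [mul_assoc, intervalIntegral.integral_const_mul, ofReal_zero, ofReal_one, sub_self,
    sub_zero, one_pow, zero_pow r.succ_ne_zero, zero_mul, one_mul, mul_zero, Complex.cos_zero] at h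
  linear_combination -h

lemma mul_integral_one_sub_pow_succ_mul_cos (c : ℂ) (r : ℕ) :
    c * ∫ u in (0 : ℝ)..1, (1 - (u : ℂ)) ^ (r + 1) * cos (c * u)
      = (r + 1) * ∫ u in (0 : ℝ)..1, (1 - (u : ℂ)) ^ r * sin (c * u) := by
  have h := intervalIntegral.integral_mul_deriv_eq_deriv_mul
    (fun u _ => hasDerivAt_one_sub_ofReal_pow r u) (fun u _ => hasDerivAt_sin_mul_ofReal c u)
    (Continuous.intervalIntegrable (by fun_prop) 0 1) (Continuous.intervalIntegrable (by fun_prop) 0 1)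
  simp only [neg_mul, intervalIntegral.integral_neg, mul_left_comm _ c] at h
  simp only [mul_assoc, intervalIntegral.integral_const_mul, ofReal_zero, ofReal_one, sub_self,
    zero_pow r.succ_ne_zero, zero_mul, mul_zero, Complex.sin_zero] at h
  linear_combination h

noncomputable def cosTaylor (k : ℕ) (z : ℂ) : ℂ :=
  ∑ i ∈ range (k + 1), (-1) ^ i * z ^ (2 * i) / (2 * i).factorial

lemma cos_sub_cosTaylor_eq_integral (c : ℂ) (k : ℕ) :
    cos c - cosTaylor k c = (-1) ^ (k + 1) / (2 * k).factorial * c ^ (2 * k + 1) *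
      ∫ u in (0 : ℝ)..1, (1 - (u : ℂ)) ^ (2 * k) * sin (c * u) := by
  induction k with
  | zero =>
    simp only [cosTaylor, zero_add, range_one, sum_singleton, mul_zero, pow_zero, Nat.factorial_zero,
      Nat.cast_one, div_one, pow_one, one_mul]
    linear_combination mul_integral_sin_mul c
  | succ k ih =>
    rw [cosTaylor] at ih
    have hparts : c ^ 2 * ∫ u in (0 : ℝ)..1, (1 - (u : ℂ)) ^ (2 * k + 2) * sin (c * u)
        = c - (2 * k + 2) * (2 * k + 1) * ∫ u in (0 : ℝ)..1, (1 - (u : ℂ)) ^ (2 * k) * sin (c * u) := by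
      have h₁ := mul_integral_one_sub_pow_succ_mul_sin c (2 * k + 1)
      have h₂ := mul_integral_one_sub_pow_succ_mul_cos c (2 * k)
      push_cast at h₁ h₂
      linear_combination c * h₁ - (2 * k + 2) * h₂
    have hfac : ((2 * (k + 1)).factorial : ℂ) = (2 * k + 2) * (2 * k + 1) * (2 * k).factorial := by
      rw [show 2 * (k + 1) = 2 * k + 1 + 1 by ring, Nat.factorial_succ, Nat.factorial_succ]
      push_cast
      ring
    rw [cosTaylor, sum_range_succ, hfac, show 2 * (k + 1) = 2 * k + 2 by ring]
    generalize ∫ u in (0 : ℝ)..1, (1 - (u : ℂ)) ^ (2 * k) * sin (c * u) = I at ih hparts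
    generalize ∫ u in (0 : ℝ)..1, (1 - (u : ℂ)) ^ (2 * k + 2) * sin (c * u) = J at hparts ⊢
    have hF : ((2 * k).factorial : ℂ) ≠ 0 := Nat.cast_ne_zero.2 (Nat.factorial_ne_zero _)
    have hD : (2 * k + 2 : ℂ) ≠ 0 := by norm_cast
    have hD' : (2 * k + 1 : ℂ) ≠ 0 := by norm_cast
    field_simp at ih ⊢
    linear_combination (2 * k + 2) * (2 * k + 1) * ih + (-1) ^ (k + 1) * c ^ (2 * k + 1) * hparts

lemma one_div_pow_mul_cos_sub_cosTaylor (P d : ℂ) (k : ℕ) :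
    1 / d ^ (2 * k + 1) * (cos (P * d) - cosTaylor k (P * d))
      = (-1) ^ (k + 1) * P ^ (2 * k + 1) / (2 * k).factorial *
        ∫ u in (0 : ℝ)..1, (1 - (u : ℂ)) ^ (2 * k) * sin (P * d * u) := by
  rcases eq_or_ne d 0 with rfl | hd
  · simp
  rw [cos_sub_cosTaylor_eq_integral, mul_pow]
  generalize ∫ u in (0 : ℝ)..1, (1 - (u : ℂ)) ^ (2 * k) * sin (P * d * u) = I
  field_simp

lemma one_div_pow_mul_cosTaylor (P d : ℂ) (k : ℕ) :
    1 / d ^ (2 * k + 1) * cosTaylor k (P * d)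
      = ∑ i ∈ range (k + 1),
          (-1) ^ (k - i) * P ^ (2 * k - 2 * i) / (2 * k - 2 * i).factorial * (1 / d ^ (2 * i + 1)) := by
  rcases eq_or_ne d 0 with rfl | hd
  · simp
  rw [cosTaylor, mul_sum, ← sum_range_reflect]
  refine sum_congr rfl fun i hi => ?_
  have hik : i ≤ k := Nat.lt_succ_iff.1 (mem_range.1 hi)
  have hsplit : d ^ (2 * k + 1) = d ^ (2 * (k - i)) * d ^ (2 * i + 1) := by
    rw [← pow_add]; congr 1; omega
  rw [show k + 1 - 1 - i = k - i by omega, show 2 * k - 2 * i = 2 * (k - i) by omega,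
    hsplit, mul_pow]
  field_simp

lemma sum_one_div_pow_mul_cos {ι : Type*} (s : Finset ι) (d : ι → ℂ) (P : ℂ) (k : ℕ) :
    ∑ j ∈ s, 1 / d j ^ (2 * k + 1) * cos (P * d j)
      = (∑ i ∈ range (k + 1), (-1) ^ (k - i) * P ^ (2 * k - 2 * i) / (2 * k - 2 * i).factorial *
          ∑ j ∈ s, 1 / d j ^ (2 * i + 1))
        + (-1) ^ (k + 1) * P ^ (2 * k + 1) / (2 * k).factorial *
          ∑ j ∈ s, ∫ u in (0 : ℝ)..1, (1 - (u : ℂ)) ^ (2 * k) * sin (P * d j * u) := by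
  simp only [mul_sum]
  rw [sum_comm, ← sum_add_distrib]
  refine sum_congr rfl fun j _ => ?_
  rw [← one_div_pow_mul_cosTaylor, ← one_div_pow_mul_cos_sub_cosTaylor]
  ring

lemma two_mul_sin_mul_sum_sin (δ θ : ℂ) (n : ℕ) :
    2 * sin (δ / 2) * ∑ j ∈ Icc 1 n, sin (j * δ + θ)
      = cos (θ + δ / 2) - cos (n * δ + θ + δ / 2) := by
  induction n with
  | zero => simp
  | succ n ih =>
    have harg : (n : ℂ) * δ + θ + δ / 2 = ((n + 1 : ℕ) : ℂ) * δ + θ - δ / 2 := by push_cast; ring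
    rw [sum_Icc_succ_top (by omega), mul_add, ih, harg]
    linear_combination Complex.cos_add (((n + 1 : ℕ) : ℂ) * δ + θ) (δ / 2)
      - Complex.cos_sub (((n + 1 : ℕ) : ℂ) * δ + θ) (δ / 2)

lemma cos_sub_cos_mul_cot (δ θ : ℂ) (n : ℕ) (h : sin (δ / 2) ≠ 0) :
    (cos (n * δ + θ) - cos θ) * cot (δ / 2)
      = sin (n * δ + θ) - sin θ - 2 * ∑ j ∈ Icc 1 n, sin (j * δ + θ) := by
  rw [Complex.cot_eq_cos_div_sin, mul_div_assoc', div_eq_iff h]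
  linear_combination two_mul_sin_mul_sum_sin δ θ n - Complex.cos_add (n * δ + θ) (δ / 2)
    + Complex.cos_add θ (δ / 2)

lemma ae_sin_mul_ofReal_ne_zero {α : ℂ} (hα : α ≠ 0) : ∀ᵐ u : ℝ, sin (α * u) ≠ 0 := by
  have hzeros : {u : ℝ | sin (α * u) = 0} ⊆
      (fun u : ℝ => α * u) ⁻¹' Set.range (fun ℓ : ℤ => (ℓ : ℂ) * π) := fun u hu =>
    let ⟨ℓ, hℓ⟩ := Complex.sin_eq_zero_iff.1 hu; ⟨ℓ, hℓ.symm⟩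
  have hinj : Function.Injective (fun u : ℝ => α * u) :=
    (mul_right_injective₀ hα).comp ofReal_injective
  have hcount := ((Set.countable_range _).preimage hinj).mono hzeros
  simpa [MeasureTheory.measure_eq_zero_iff_ae_notMem] using hcount.measure_zero MeasureTheory.volume

lemma integral_mul_cos_sub_cos_mul_cot {g : ℝ → ℂ} (hg : Continuous g) {p a : ℂ} (hpa : p * a ≠ 0)
    (b : ℂ) (n : ℕ) (s t : ℝ) :
    ∫ u in s..t, g u * (cos (p * (a * n + b) * u) - cos (p * b * u)) * cot (p * a / 2 * u)
      = (∫ u in s..t, g u * sin (p * (a * n + b) * u)) - (∫ u in s..t, g u * sin (p * b * u))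
        - 2 * ∑ j ∈ Icc 1 n, ∫ u in s..t, g u * sin (p * (a * j + b) * u) := by
  have hint : ∀ c : ℂ, IntervalIntegrable (fun u : ℝ => g u * sin (c * u)) MeasureTheory.volume s t :=
    fun c => (by fun_prop : Continuous _).intervalIntegrable s t
  rw [← intervalIntegral.integral_finsetSum fun j _ => hint _,
    ← intervalIntegral.integral_const_mul, ← intervalIntegral.integral_sub (hint _) (hint _),
    ← intervalIntegral.integral_sub ((hint _).sub (hint _))
      ((by fun_prop : Continuous _).intervalIntegrable s t)]
  refine intervalIntegral.integral_congr_ae ?_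
  filter_upwards [ae_sin_mul_ofReal_ne_zero (div_ne_zero hpa two_ne_zero)] with u hu _
  have harg : ∀ x : ℂ, p * (a * x + b) * u = x * (p * a * u) + p * b * u := fun x => by ring
  rw [show p * a / 2 * u = p * a * u / 2 by ring] at hu ⊢
  simp only [harg, mul_assoc (g u), cos_sub_cos_mul_cot _ _ n hu, ← mul_sum]
  ring

theorem stmt_16_general (a b : ℤ) (ha : a ≠ 0) (n : ℕ) (m : ℂ) (hm : m ≠ 0) (k : ℕ) :
    ∑ j ∈ Finset.Icc 1 n,
        (1 : ℂ) / (a * j + b) ^ (2 * k + 1) *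
          Complex.cos (2 * π * ((a : ℂ) * j + b) / m) =
      -(1 / (2 * (b : ℂ) ^ (2 * k + 1))) *
          (Complex.cos (2 * π * (b : ℂ) / m) -
            ∑ j ∈ Finset.range (k + 1),
              (-1 : ℂ) ^ j * (2 * π * (b : ℂ) / m) ^ (2 * j) / (Nat.factorial (2 * j)))
      + (1 / (2 * ((a : ℂ) * n + b) ^ (2 * k + 1))) *
          (Complex.cos (2 * π * ((a : ℂ) * n + b) / m) -
            ∑ j ∈ Finset.range (k + 1),
              (-1 : ℂ) ^ j * (2 * π * ((a : ℂ) * n + b) / m) ^ (2 * j) /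
                (Nat.factorial (2 * j)))
      + (∑ j ∈ Finset.range (k + 1),
          ((-1 : ℂ) ^ (k - j) * (2 * π / m) ^ (2 * k - 2 * j) /
              (Nat.factorial (2 * k - 2 * j))) *
            ∑ i ∈ Finset.Icc 1 n, (1 : ℂ) / (a * i + b) ^ (2 * j + 1))
      + ((-1 : ℂ) ^ k * (2 * π / m) ^ (2 * k + 1) / (2 * (Nat.factorial (2 * k)))) *
          ∫ u in (0:ℝ)..1,
            (1 - (u : ℂ)) ^ (2 * k) *
              (Complex.cos (2 * π * ((a : ℂ) * n + b) * u / m)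
                - Complex.cos (2 * π * (b : ℂ) * u / m)) *
              Complex.cot (π * (a : ℂ) * u / m) := by
  have hrule : ∀ x : ℂ, 2 * π * x / m = 2 * π / m * x := fun x => by ring
  have hrule' : ∀ x y : ℂ, 2 * π * x * y / m = 2 * π / m * x * y := fun x y => by ring
  have hcot_arg : ∀ y : ℂ, π * a * y / m = 2 * π / m * a / 2 * y := fun y => by ring
  have hT : ∀ z, ∑ i ∈ range (k + 1), (-1 : ℂ) ^ i * z ^ (2 * i) / (2 * i).factorial
      = cosTaylor k z := fun _ => rfl
  have hpa : 2 * π / m * a ≠ 0 := by simp [ha, hm, pi_ne_zero]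
  simp only [hrule, hrule', hcot_arg, hT]
  rw [integral_mul_cos_sub_cos_mul_cot (by fun_prop) hpa, sum_one_div_pow_mul_cos]
  -- `ring` only splits `(2 * d ^ (2 * k + 1))⁻¹` when `d` is an atom
  generalize (a : ℂ) * n + b = d
  linear_combination (1 / 2 : ℂ) * one_div_pow_mul_cos_sub_cosTaylor (2 * π / m) b k
    - (1 / 2 : ℂ) * one_div_pow_mul_cos_sub_cosTaylor (2 * π / m) d k

theorem stmt_16 (a b : ℤ) (ha : a ≠ 0) (hb : b ≠ 0) (n : ℕ) (hn : 0 < n)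
    (h : ∀ j : ℤ, 1 ≤ j → j ≤ n → a * j + b ≠ 0) (m : ℂ) (hm : m ≠ 0) (k : ℕ) :
    ∑ j ∈ Finset.Icc 1 n,
        (1 : ℂ) / (a * j + b) ^ (2 * k + 1) *
          Complex.cos (2 * π * ((a : ℂ) * j + b) / m) =
      -(1 / (2 * (b : ℂ) ^ (2 * k + 1))) *
          (Complex.cos (2 * π * (b : ℂ) / m) -
            ∑ j ∈ Finset.range (k + 1),
              (-1 : ℂ) ^ j * (2 * π * (b : ℂ) / m) ^ (2 * j) / (Nat.factorial (2 * j)))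
      + (1 / (2 * ((a : ℂ) * n + b) ^ (2 * k + 1))) *
          (Complex.cos (2 * π * ((a : ℂ) * n + b) / m) -
            ∑ j ∈ Finset.range (k + 1),
              (-1 : ℂ) ^ j * (2 * π * ((a : ℂ) * n + b) / m) ^ (2 * j) /
                (Nat.factorial (2 * j)))
      + (∑ j ∈ Finset.range (k + 1),
          ((-1 : ℂ) ^ (k - j) * (2 * π / m) ^ (2 * k - 2 * j) /
              (Nat.factorial (2 * k - 2 * j))) *
            ∑ i ∈ Finset.Icc 1 n, (1 : ℂ) / (a * i + b) ^ (2 * j + 1))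
      + ((-1 : ℂ) ^ k * (2 * π / m) ^ (2 * k + 1) / (2 * (Nat.factorial (2 * k)))) *
          ∫ u in (0:ℝ)..1,
            (1 - (u : ℂ)) ^ (2 * k) *
              (Complex.cos (2 * π * ((a : ℂ) * n + b) * u / m)
                - Complex.cos (2 * π * (b : ℂ) * u / m)) *
              Complex.cot (π * (a : ℂ) * u / m) :=
  stmt_16_general a b ha n m hm k
end
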